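/- arXiv:2111.06355 — 2 statements merged into one kernel-verified Lean document; each statement's English description precedes it below -/
import Mathlib

section
/- For a Hermitian matrix H, the maximum over unit vectors |ψ⟩ of the variance ⟨ψ|H²|ψ⟩ − ⟨ψ|H|ψ⟩² equals Δ(H)²/4, where Δ(H) is the spectral spread of H; consequently the maximal pure-state QFI for the unitary family e^{−iHθ} equals Δ(H)². -/
open Matrix

/-- The spectral spread `Δ(M) = λ_max(M) − λ_min(M)` of a Hermitian matrix. -/
noncomputable def spectralSpread {n : Type*} [Fintype n] [DecidableEq n]
    {A : Matrix n n ℂ} (hA : A.IsHermitian) : ℝ :=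
  (⨆ i, hA.eigenvalues i) - ⨅ i, hA.eigenvalues i

/-- The variance of a Hermitian `H` in the state given by the unit vector `ψ`. -/
noncomputable def matVariance {n : ℕ} (H : Matrix (Fin n) (Fin n) ℂ) (ψ : Fin n → ℂ) : ℝ :=
  (star ψ ⬝ᵥ ((H * H) *ᵥ ψ)).re - (star ψ ⬝ᵥ (H *ᵥ ψ)).re ^ 2

private lemma quad_form {n : ℕ} (V : Matrix (Fin n) (Fin n) ℂ) (d : Fin n → ℝ) (ψ : Fin n → ℂ) :
    star ψ ⬝ᵥ ((V * diagonal (fun i => (d i : ℂ)) * star V) *ᵥ ψ)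
      = ∑ i, (d i : ℂ) * ((‖(star V *ᵥ ψ) i‖ ^ 2 : ℝ) : ℂ) := by
  set c := star V *ᵥ ψ with hc
  have h1 : star ψ ᵥ* V = star c := by
    rw [hc, Matrix.star_eq_conjTranspose, star_mulVec, conjTranspose_conjTranspose]
  rw [← mulVec_mulVec, ← mulVec_mulVec, dotProduct_mulVec, h1, ← hc]
  simp only [dotProduct, mulVec_diagonal, Pi.star_apply]
  congr 1
  ext i
  rw [show star (c i) = (starRingEnd ℂ) (c i) from rfl,
    show (starRingEnd ℂ) (c i) * ((d i : ℂ) * c i)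
      = (d i : ℂ) * ((starRingEnd ℂ) (c i) * c i) by ring]
  congr 1
  rw [Complex.conj_mul']
  norm_cast

private lemma real_var_le {n : ℕ} [Nonempty (Fin n)] (ev p : Fin n → ℝ) (hp : ∀ i, 0 ≤ p i)
    (h1 : ∑ i, p i = 1) :
    ∑ i, ev i ^ 2 * p i - (∑ i, ev i * p i) ^ 2
      ≤ ((⨆ i, ev i) - ⨅ i, ev i) ^ 2 / 4 := by
  set M := ⨆ i, ev i with hM
  set m := ⨅ i, ev i with hm
  have hub : ∀ i, ev i ≤ M := fun i => le_ciSup (Set.Finite.bddAbove (Set.finite_range ev)) i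
  have hlb : ∀ i, m ≤ ev i := fun i => ciInf_le (Set.Finite.bddBelow (Set.finite_range ev)) i
  set cc := (M + m) / 2 with hcc
  have key : ∀ i, (ev i - cc) ^ 2 * p i ≤ ((M - m) / 2) ^ 2 * p i := by
    intro i
    apply mul_le_mul_of_nonneg_right _ (hp i)
    apply sq_le_sq'
    · have := hlb i; rw [hcc]; linarith
    · have := hub i; rw [hcc]; linarith
  have h2 : ∑ i, (ev i - cc) ^ 2 * p i ≤ ((M - m) / 2) ^ 2 := by
    calc ∑ i, (ev i - cc) ^ 2 * p i ≤ ∑ i, ((M - m) / 2) ^ 2 * p i :=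
          Finset.sum_le_sum fun i _ => key i
      _ = ((M - m) / 2) ^ 2 := by rw [← Finset.mul_sum, h1, mul_one]
  have h3 : ∑ i, (ev i - cc) ^ 2 * p i
      = ∑ i, ev i ^ 2 * p i - 2 * cc * ∑ i, ev i * p i + cc ^ 2 := by
    have : ∀ i, (ev i - cc) ^ 2 * p i = ev i ^ 2 * p i - 2 * cc * (ev i * p i) + cc ^ 2 * p i := by
      intro i; ring
    rw [Finset.sum_congr rfl fun i _ => this i, Finset.sum_add_distrib, Finset.sum_sub_distrib,
      ← Finset.mul_sum, ← Finset.mul_sum, h1, mul_one]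
  nlinarith [sq_nonneg (∑ i, ev i * p i - cc)]

private lemma sum_two {α : Type*} [Fintype α] [DecidableEq α] {a b : α} (hab : a ≠ b)
    (f : α → ℝ) :
    ∑ i, (if i = a then f i else if i = b then f i else 0) = f a + f b := by
  have : ∀ i, (if i = a then f i else if i = b then f i else 0)
      = (if i = a then f i else 0) + (if i = b then f i else 0) := by
    intro i
    by_cases h1 : i = a
    · subst h1; simp [hab]
    · by_cases h2 : i = b
      · subst h2; simp [h1, Ne.symm hab]
      · simp [h1, h2]
  rw [Finset.sum_congr rfl fun i _ => this i, Finset.sum_add_distrib,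
    Finset.sum_ite_eq' Finset.univ a f, Finset.sum_ite_eq' Finset.univ b f]
  simp

/-- The maximum over unit vectors of the variance of `H` equals `Δ(H)²/4`;
consequently the maximal pure-state QFI `4·Var` for the family `e^{−iHθ}` equals `Δ(H)²`. -/
theorem max_variance_eq_spread_sq_div_four {n : ℕ} (hn : 0 < n)
    {H : Matrix (Fin n) (Fin n) ℂ} (hH : H.IsHermitian) :
    IsGreatest {v : ℝ | ∃ ψ : Fin n → ℂ, star ψ ⬝ᵥ ψ = 1 ∧ v = matVariance H ψ}
      (spectralSpread hH ^ 2 / 4) ∧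
    IsGreatest {F : ℝ | ∃ ψ : Fin n → ℂ, star ψ ⬝ᵥ ψ = 1 ∧ F = 4 * matVariance H ψ}
      (spectralSpread hH ^ 2) := by
  have hne : Nonempty (Fin n) := Fin.pos_iff_nonempty.mp hn
  set ev := hH.eigenvalues with hev
  set V : Matrix (Fin n) (Fin n) ℂ := (hH.eigenvectorUnitary : Matrix (Fin n) (Fin n) ℂ) with hV
  have hspec : H = V * diagonal (fun i => (ev i : ℂ)) * star V := hH.spectral_theorem
  have hUV : V * star V = 1 := mem_unitaryGroup_iff.mp hH.eigenvectorUnitary.2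
  have hVU : star V * V = 1 := mem_unitaryGroup_iff'.mp hH.eigenvectorUnitary.2
  have hH2 : H * H = V * diagonal (fun i => ((ev i ^ 2 : ℝ) : ℂ)) * star V := by
    rw [hspec,
      show (V * diagonal (fun i => (ev i : ℂ)) * star V) * (V * diagonal (fun i => (ev i : ℂ)) * star V)
        = V * (diagonal (fun i => (ev i : ℂ)) * (star V * V) * diagonal (fun i => (ev i : ℂ))) * star V by
        simp only [Matrix.mul_assoc],
      hVU, Matrix.mul_one, diagonal_mul_diagonal]
    congr 2
    ext i
    push_cast
    ring
  have hcw : ∀ φ : Fin n → ℂ, star V *ᵥ (V *ᵥ φ) = φ := by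
    intro φ; rw [mulVec_mulVec, hVU, one_mulVec]
  have hdot : ∀ φ : Fin n → ℂ, star (V *ᵥ φ) ⬝ᵥ (V *ᵥ φ) = star φ ⬝ᵥ φ := by
    intro φ
    rw [star_mulVec, dotProduct_mulVec, vecMul_vecMul,
      show Vᴴ * V = 1 from hVU, vecMul_one]
  -- quadratic form formulas
  have hmean : ∀ ψ : Fin n → ℂ,
      (star ψ ⬝ᵥ (H *ᵥ ψ)).re = ∑ i, ev i * ‖(star V *ᵥ ψ) i‖ ^ 2 := by
    intro ψ
    rw [hspec, quad_form V ev ψ]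
    rw [show (∑ i, (ev i : ℂ) * ((‖(star V *ᵥ ψ) i‖ ^ 2 : ℝ) : ℂ))
        = ((∑ i, ev i * ‖(star V *ᵥ ψ) i‖ ^ 2 : ℝ) : ℂ) by push_cast; ring]
    exact Complex.ofReal_re _
  have hmean2 : ∀ ψ : Fin n → ℂ,
      (star ψ ⬝ᵥ ((H * H) *ᵥ ψ)).re = ∑ i, ev i ^ 2 * ‖(star V *ᵥ ψ) i‖ ^ 2 := by
    intro ψ
    rw [hH2, quad_form V (fun i => ev i ^ 2) ψ]
    rw [show (∑ i, ((ev i ^ 2 : ℝ) : ℂ) * ((‖(star V *ᵥ ψ) i‖ ^ 2 : ℝ) : ℂ))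
        = ((∑ i, ev i ^ 2 * ‖(star V *ᵥ ψ) i‖ ^ 2 : ℝ) : ℂ) by push_cast; ring]
    exact Complex.ofReal_re _
  have hvar : ∀ ψ : Fin n → ℂ, matVariance H ψ
      = ∑ i, ev i ^ 2 * ‖(star V *ᵥ ψ) i‖ ^ 2 - (∑ i, ev i * ‖(star V *ᵥ ψ) i‖ ^ 2) ^ 2 := by
    intro ψ
    rw [matVariance, hmean, hmean2]
  have hnorm : ∀ ψ : Fin n → ℂ, star ψ ⬝ᵥ ψ = 1 → ∑ i, ‖(star V *ᵥ ψ) i‖ ^ 2 = 1 := by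
    intro ψ h
    have h0 : star ψ ⬝ᵥ ψ = star ψ ⬝ᵥ ((V * diagonal (fun _ : Fin n => ((1 : ℝ) : ℂ)) * star V) *ᵥ ψ) := by
      rw [show diagonal (fun _ : Fin n => ((1 : ℝ) : ℂ)) = 1 by simp [Matrix.diagonal_one],
        Matrix.mul_one, hUV, one_mulVec]
    rw [h0, quad_form] at h
    simp only [Complex.ofReal_one, one_mul] at h
    exact_mod_cast h
  -- sup and inf are attained
  obtain ⟨a, ha⟩ := Finite.exists_max ev
  obtain ⟨b, hb⟩ := Finite.exists_min ev
  have hMa : (⨆ i, ev i) = ev a :=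
    le_antisymm (ciSup_le ha) (le_ciSup (Set.Finite.bddAbove (Set.finite_range ev)) a)
  have hmb : (⨅ i, ev i) = ev b :=
    le_antisymm (ciInf_le (Set.Finite.bddBelow (Set.finite_range ev)) b) (le_ciInf hb)
  have hSS : spectralSpread hH = ev a - ev b := by rw [spectralSpread, ← hev, hMa, hmb]
  -- the witness
  have hwit : ∃ ψ : Fin n → ℂ, star ψ ⬝ᵥ ψ = 1 ∧
      spectralSpread hH ^ 2 / 4 = matVariance H ψ := by
    by_cases hab : a = b
    · -- spread is zero; use an eigenvector
      subst hab
      refine ⟨V *ᵥ (fun i => if i = a then 1 else 0), ?_, ?_⟩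
      · rw [hdot]
        simp [dotProduct, apply_ite]
      · have hc : star V *ᵥ (V *ᵥ (fun i => if i = a then (1:ℂ) else 0))
            = fun i => if i = a then 1 else 0 := hcw _
        have hnrm : ∀ i, ‖(if i = a then (1:ℂ) else 0)‖ ^ 2 = if i = a then (1:ℝ) else 0 := by
          intro i; by_cases h : i = a <;> simp [h]
        rw [hvar, hc, hSS]
        simp only [hnrm]
        rw [Finset.sum_congr rfl (fun i _ => show ev i ^ 2 * (if i = a then (1:ℝ) else 0)
            = if i = a then ev i ^ 2 else 0 by by_cases h : i = a <;> simp [h]),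
          Finset.sum_congr rfl (fun i _ => show ev i * (if i = a then (1:ℝ) else 0)
            = if i = a then ev i else 0 by by_cases h : i = a <;> simp [h]),
          Finset.sum_ite_eq' Finset.univ a (fun i => ev i ^ 2),
          Finset.sum_ite_eq' Finset.univ a ev]
        simp only [Finset.mem_univ, if_true]
        ring
    · -- equal superposition of extreme eigenvectors
      set c : Fin n → ℂ := fun i => ((Real.sqrt (1/2) : ℝ) : ℂ) * (if i = a then 1 else if i = b then 1 else 0) with hcdef
      have hnrm : ∀ i, ‖c i‖ ^ 2 = if i = a then (1/2 : ℝ) else if i = b then (1/2 : ℝ) else 0 := by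
        intro i
        by_cases h1 : i = a
        · simp [hcdef, h1, Real.sq_sqrt]
        · by_cases h2 : i = b <;> simp [hcdef, h1, h2, Real.sq_sqrt]
      refine ⟨V *ᵥ c, ?_, ?_⟩
      · rw [hdot]
        have hsum : ∑ i, ‖c i‖ ^ 2 = 1 := by
          simp only [hnrm]
          rw [sum_two hab (fun _ => (1/2 : ℝ))]
          norm_num
        calc star c ⬝ᵥ c = ∑ i, ((‖c i‖ ^ 2 : ℝ) : ℂ) := by
              simp only [dotProduct, Pi.star_apply]
              congr 1; ext i
              rw [show star (c i) = (starRingEnd ℂ) (c i) from rfl, Complex.conj_mul']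
              norm_cast
          _ = ((∑ i, ‖c i‖ ^ 2 : ℝ) : ℂ) := by push_cast; ring
          _ = 1 := by rw [hsum]; norm_num
      · have hc2 : star V *ᵥ (V *ᵥ c) = c := hcw _
        rw [hvar, hc2, hSS]
        simp only [hnrm]
        rw [Finset.sum_congr rfl (fun i _ => show ev i ^ 2 * (if i = a then (1/2:ℝ) else if i = b then (1/2:ℝ) else 0)
            = if i = a then ev i ^ 2 / 2 else if i = b then ev i ^ 2 / 2 else 0 by
            by_cases h1 : i = a
            · simp [h1]; ring
            · by_cases h2 : i = b <;> simp [h1, h2] <;> ring),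
          Finset.sum_congr rfl (fun i _ => show ev i * (if i = a then (1/2:ℝ) else if i = b then (1/2:ℝ) else 0)
            = if i = a then ev i / 2 else if i = b then ev i / 2 else 0 by
            by_cases h1 : i = a
            · simp [h1]; ring
            · by_cases h2 : i = b <;> simp [h1, h2] <;> ring),
          sum_two hab (fun i => ev i ^ 2 / 2), sum_two hab (fun i => ev i / 2)]
        ring
  -- upper bound
  have hub : ∀ v ∈ {v : ℝ | ∃ ψ : Fin n → ℂ, star ψ ⬝ᵥ ψ = 1 ∧ v = matVariance H ψ},
      v ≤ spectralSpread hH ^ 2 / 4 := by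
    rintro v ⟨ψ, hψ, rfl⟩
    rw [hvar]
    have := real_var_le ev (fun i => ‖(star V *ᵥ ψ) i‖ ^ 2) (fun i => sq_nonneg _) (hnorm ψ hψ)
    rwa [show spectralSpread hH = (⨆ i, ev i) - ⨅ i, ev i from rfl]
  have first : IsGreatest {v : ℝ | ∃ ψ : Fin n → ℂ, star ψ ⬝ᵥ ψ = 1 ∧ v = matVariance H ψ}
      (spectralSpread hH ^ 2 / 4) := ⟨hwit, hub⟩
  refine ⟨first, ?_, ?_⟩
  · obtain ⟨ψ, h1, h2⟩ := first.1
    exact ⟨ψ, h1, by rw [← h2]; ring⟩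
  · rintro F ⟨ψ, hψ, rfl⟩
    have := first.2 ⟨ψ, hψ, rfl⟩
    linarith
end

section
/- Let |ψ⟩ be a unit vector and H Hermitian. Then the overlap satisfies |⟨ψ|e^{−iHθ}|ψ⟩|² ≥ 1 − θ²·Var_ψ(H) for all θ ∈ ℝ, where Var_ψ(H) = ⟨ψ|H²|ψ⟩ − ⟨ψ|H|ψ⟩²; hence the purified distance between |ψ⟩ and e^{−iHθ}|ψ⟩ is at most |θ|·√(Var_ψ(H)) ≤ |θ|·Δ(H)/2. -/
open Matrix

section AuxLemmas
open Finset

private lemma key_overlap {ι : Type*} [Fintype ι] (p lam : ι → ℝ) (hp : ∀ i, 0 ≤ p i)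
    (hp1 : ∑ i, p i = 1) (θ : ℝ) :
    1 - θ ^ 2 * (∑ i, p i * lam i ^ 2 - (∑ i, p i * lam i) ^ 2) ≤
      ‖∑ i, (p i : ℂ) * Complex.exp (-Complex.I * θ * lam i)‖ ^ 2 := by
  set m := ∑ i, p i * lam i with hm
  have hV : ∑ i, p i * (lam i - m) ^ 2 = ∑ i, p i * lam i ^ 2 - m ^ 2 := by
    have h : ∀ i ∈ univ, p i * (lam i - m) ^ 2
        = p i * lam i ^ 2 - 2 * m * (p i * lam i) + m ^ 2 * p i := fun i _ => by ring
    rw [Finset.sum_congr rfl h, Finset.sum_add_distrib, Finset.sum_sub_distrib,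
      ← Finset.mul_sum, ← Finset.mul_sum, hp1, ← hm]
    ring
  set V := ∑ i, p i * (lam i - m) ^ 2 with hVdef
  have hV0 : 0 ≤ V := Finset.sum_nonneg fun i _ => mul_nonneg (hp i) (sq_nonneg _)
  set g := ∑ i, (p i : ℂ) * Complex.exp (-Complex.I * θ * (lam i - m)) with hg
  have habs : ‖∑ i, (p i : ℂ) * Complex.exp (-Complex.I * θ * lam i)‖
      = ‖g‖ := by
    have : (∑ i, (p i : ℂ) * Complex.exp (-Complex.I * θ * lam i))
        = Complex.exp (-Complex.I * θ * m) * g := by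
      rw [hg, Finset.mul_sum]
      refine Finset.sum_congr rfl fun i _ => ?_
      rw [mul_left_comm, ← Complex.exp_add]
      congr 2
      ring
    rw [this, norm_mul, Complex.norm_exp]
    have : (-Complex.I * θ * m).re = 0 := by simp
    rw [this, Real.exp_zero, one_mul]
  have hre : 1 - θ ^ 2 * V / 2 ≤ g.re := by
    have hgre : g.re = ∑ i, p i * Real.cos (θ * (lam i - m)) := by
      rw [hg, Complex.re_sum]
      refine Finset.sum_congr rfl fun i _ => ?_
      have : -Complex.I * θ * (lam i - m) = ((-(θ * (lam i - m)) : ℝ) : ℂ) * Complex.I := by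
        push_cast; ring
      rw [this, Complex.mul_re, Complex.exp_ofReal_mul_I_re]
      simp [Real.cos_neg]
    rw [hgre]
    have : 1 - θ ^ 2 * V / 2 = ∑ i, p i * (1 - (θ * (lam i - m)) ^ 2 / 2) := by
      have h : ∀ i ∈ univ, p i * (1 - (θ * (lam i - m)) ^ 2 / 2)
          = p i - θ ^ 2 / 2 * (p i * (lam i - m) ^ 2) := fun i _ => by ring
      rw [Finset.sum_congr rfl h, Finset.sum_sub_distrib, ← Finset.mul_sum, hp1, ← hVdef]
      ring
    rw [this]
    exact Finset.sum_le_sum fun i _ =>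
      mul_le_mul_of_nonneg_left (Real.one_sub_sq_div_two_le_cos) (hp i)
  rw [habs, ← hV]
  have h1 : g.re ≤ ‖g‖ := Complex.re_le_norm g
  rcases le_or_gt (θ ^ 2 * V) 1 with h | h
  · nlinarith [norm_nonneg g, sq_nonneg (θ ^ 2 * V)]
  · nlinarith [norm_nonneg g, sq_nonneg ‖g‖]

private lemma key_popoviciu {ι : Type*} [Fintype ι] [Nonempty ι] (p lam : ι → ℝ)
    (hp : ∀ i, 0 ≤ p i) (hp1 : ∑ i, p i = 1) :
    ∑ i, p i * lam i ^ 2 - (∑ i, p i * lam i) ^ 2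
      ≤ (((⨆ i, lam i) - ⨅ i, lam i) / 2) ^ 2 := by
  set m := ∑ i, p i * lam i with hm
  set a := ⨅ i, lam i with ha
  set b := ⨆ i, lam i with hb
  set c := (a + b) / 2 with hc
  have hbdd : ∀ i, (lam i - c) ^ 2 ≤ ((b - a) / 2) ^ 2 := by
    intro i
    have h1 : a ≤ lam i := ciInf_le (Set.Finite.bddBelow (Set.finite_range lam)) i
    have h2 : lam i ≤ b := le_ciSup (Set.Finite.bddAbove (Set.finite_range lam)) i
    have : |lam i - c| ≤ (b - a) / 2 := by
      rw [abs_le]; constructor <;> simp only [hc] <;> linarith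
    calc (lam i - c) ^ 2 = |lam i - c| ^ 2 := (sq_abs _).symm
      _ ≤ ((b - a) / 2) ^ 2 := by
          apply pow_le_pow_left₀ (abs_nonneg _) this
  have key : ∑ i, p i * lam i ^ 2 - m ^ 2 = ∑ i, p i * (lam i - c) ^ 2 - (m - c) ^ 2 := by
    have h : ∀ i ∈ univ, p i * (lam i - c) ^ 2
        = p i * lam i ^ 2 - 2 * c * (p i * lam i) + c ^ 2 * p i := fun i _ => by ring
    rw [Finset.sum_congr rfl h, Finset.sum_add_distrib, Finset.sum_sub_distrib,
      ← Finset.mul_sum, ← Finset.mul_sum, hp1, ← hm]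
    ring
  rw [key]
  have h2 : ∑ i, p i * (lam i - c) ^ 2 ≤ ((b - a) / 2) ^ 2 := by
    calc ∑ i, p i * (lam i - c) ^ 2 ≤ ∑ i, p i * ((b - a) / 2) ^ 2 :=
          Finset.sum_le_sum fun i _ => mul_le_mul_of_nonneg_left (hbdd i) (hp i)
      _ = ((b - a) / 2) ^ 2 := by rw [← Finset.sum_mul, hp1, one_mul]
  nlinarith [sq_nonneg (m - c)]

private lemma conj_dot {n : ℕ} (U : Matrix (Fin n) (Fin n) ℂ) (ψ : Fin n → ℂ)
    (M : Matrix (Fin n) (Fin n) ℂ) :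
    star ψ ⬝ᵥ ((U * M * star U) *ᵥ ψ) = star (star U *ᵥ ψ) ⬝ᵥ (M *ᵥ (star U *ᵥ ψ)) := by
  have hs : star (star U *ᵥ ψ) = star ψ ᵥ* U := by
    rw [star_mulVec, star_eq_conjTranspose, conjTranspose_conjTranspose]
  rw [hs, ← dotProduct_mulVec, ← mulVec_mulVec, ← mulVec_mulVec]

private lemma diag_dot {n : ℕ} (v : Fin n → ℂ) (φ : Fin n → ℂ) :
    star φ ⬝ᵥ (diagonal v *ᵥ φ) = ∑ j, v j * (Complex.normSq (φ j) : ℂ) := by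
  unfold dotProduct
  refine Finset.sum_congr rfl fun j _ => ?_
  rw [mulVec_diagonal, Complex.normSq_eq_conj_mul_self]
  simp [Pi.star_apply]
  ring

end AuxLemmas

/-- `|⟨ψ|e^{−iHθ}|ψ⟩|² ≥ 1 − θ²·Var_ψ(H)`; hence the purified distance
between `|ψ⟩` and `e^{−iHθ}|ψ⟩` is at most `|θ|·√(Var_ψ(H)) ≤ |θ|·Δ(H)/2`. -/
theorem overlap_bound_and_purified_distance {n : ℕ}
    {H : Matrix (Fin n) (Fin n) ℂ} (hH : H.IsHermitian)
    (ψ : Fin n → ℂ) (hψ : star ψ ⬝ᵥ ψ = 1) (θ : ℝ) :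
    1 - θ ^ 2 * matVariance H ψ ≤
      ‖star ψ ⬝ᵥ (NormedSpace.exp (((-Complex.I) * (θ : ℂ)) • H) *ᵥ ψ)‖ ^ 2 ∧
    Real.sqrt (1 -
        ‖star ψ ⬝ᵥ (NormedSpace.exp (((-Complex.I) * (θ : ℂ)) • H) *ᵥ ψ)‖ ^ 2)
      ≤ |θ| * Real.sqrt (matVariance H ψ) ∧
    |θ| * Real.sqrt (matVariance H ψ) ≤ |θ| * spectralSpread hH / 2 := by
  classical
  have hne : Nonempty (Fin n) := by
    rcases Nat.eq_zero_or_pos n with h | h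
    · exfalso
      subst h
      simp [dotProduct] at hψ
    · exact ⟨⟨0, h⟩⟩
  set U : Matrix (Fin n) (Fin n) ℂ := (hH.eigenvectorUnitary : Matrix (Fin n) (Fin n) ℂ) with hU
  obtain ⟨hU1, hU2⟩ := Unitary.mem_iff.mp (hH.eigenvectorUnitary).prop
  have hU1 : star U * U = 1 := hU1
  have hU2 : U * star U = 1 := hU2
  have hUinv : U⁻¹ = star U := Matrix.inv_eq_left_inv hU1
  have hUunit : IsUnit U := ⟨⟨U, star U, hU2, hU1⟩, rfl⟩
  set lam := hH.eigenvalues with hlam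
  set c : Fin n → ℂ := fun i => (lam i : ℂ) with hc
  set φ := star U *ᵥ ψ with hφ
  set p : Fin n → ℝ := fun j => Complex.normSq (φ j) with hpdef
  have hp : ∀ j, 0 ≤ p j := fun j => Complex.normSq_nonneg _
  have hspec : H = U * diagonal c * star U := by
    have := hH.spectral_theorem
    rw [Unitary.conjStarAlgAut_apply] at this
    exact this
  have hHH : H * H = U * diagonal (c * c) * star U := by
    rw [hspec]
    calc (U * diagonal c * star U) * (U * diagonal c * star U)
        = U * (diagonal c * (star U * U) * diagonal c) * star U := by noncomm_ring
      _ = U * diagonal (c * c) * star U := by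
          rw [hU1, mul_one, diagonal_mul_diagonal]
          rfl
  have hexp : NormedSpace.exp (((-Complex.I) * (θ : ℂ)) • H)
      = U * diagonal (fun i => Complex.exp (-Complex.I * θ * lam i)) * star U := by
    have h1 : ((-Complex.I) * (θ : ℂ)) • H
        = U * diagonal (((-Complex.I) * (θ : ℂ)) • c) * star U := by
      rw [hspec, ← smul_mul_assoc, ← mul_smul_comm, diagonal_smul]
    rw [h1, ← hUinv, Matrix.exp_conj U _ hUunit, Matrix.exp_diagonal, Pi.exp_def, hUinv]
    congr 2
    funext i
    rw [← Complex.exp_eq_exp_ℂ]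
    simp only [Pi.smul_apply, hc, smul_eq_mul]
  -- sum of p is 1
  have hsum : ∑ j, p j = 1 := by
    have h1 : star φ ⬝ᵥ (diagonal (fun _ => (1 : ℂ)) *ᵥ φ) = 1 := by
      rw [hφ, ← conj_dot]
      have : U * diagonal (fun _ => (1 : ℂ)) * star U = 1 := by
        rw [diagonal_one, mul_one, hU2]
      rw [this, one_mulVec, hψ]
    rw [diag_dot] at h1
    simp only [one_mul] at h1
    have h2 : ((∑ j, p j : ℝ) : ℂ) = 1 := by
      rw [Complex.ofReal_sum]
      exact h1
    exact_mod_cast h2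
  -- mean
  have hmean : (star ψ ⬝ᵥ (H *ᵥ ψ)).re = ∑ j, p j * lam j := by
    rw [hspec, conj_dot, ← hφ, diag_dot]
    rw [Complex.re_sum]
    refine Finset.sum_congr rfl fun j _ => ?_
    simp only [hc]
    rw [← Complex.ofReal_mul, Complex.ofReal_re]
    ring
  -- second moment
  have hsq : (star ψ ⬝ᵥ ((H * H) *ᵥ ψ)).re = ∑ j, p j * lam j ^ 2 := by
    rw [hHH, conj_dot, ← hφ, diag_dot]
    rw [Complex.re_sum]
    refine Finset.sum_congr rfl fun j _ => ?_
    simp only [Pi.mul_apply, hc]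
    rw [← Complex.ofReal_mul, ← Complex.ofReal_mul, Complex.ofReal_re]
    ring
  have hvar : matVariance H ψ = ∑ j, p j * lam j ^ 2 - (∑ j, p j * lam j) ^ 2 := by
    rw [matVariance, hmean, hsq]
  -- overlap
  have hover : star ψ ⬝ᵥ (NormedSpace.exp (((-Complex.I) * (θ : ℂ)) • H) *ᵥ ψ)
      = ∑ j, (p j : ℂ) * Complex.exp (-Complex.I * θ * lam j) := by
    rw [hexp, conj_dot, ← hφ, diag_dot]
    refine Finset.sum_congr rfl fun j _ => ?_
    ring
  have part1 : 1 - θ ^ 2 * matVariance H ψ ≤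
      ‖star ψ ⬝ᵥ (NormedSpace.exp (((-Complex.I) * (θ : ℂ)) • H) *ᵥ ψ)‖ ^ 2 := by
    rw [hvar, hover]
    exact key_overlap p lam hp hsum θ
  refine ⟨part1, ?_, ?_⟩
  · have h1 : 1 - ‖
        star ψ ⬝ᵥ (NormedSpace.exp (((-Complex.I) * (θ : ℂ)) • H) *ᵥ ψ)‖ ^ 2
        ≤ θ ^ 2 * matVariance H ψ := by linarith
    calc Real.sqrt (1 - ‖
          star ψ ⬝ᵥ (NormedSpace.exp (((-Complex.I) * (θ : ℂ)) • H) *ᵥ ψ)‖ ^ 2)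
        ≤ Real.sqrt (θ ^ 2 * matVariance H ψ) := Real.sqrt_le_sqrt h1
      _ = |θ| * Real.sqrt (matVariance H ψ) := by
          rw [Real.sqrt_mul (sq_nonneg θ), Real.sqrt_sq_eq_abs]
  · have hpop : matVariance H ψ ≤ (spectralSpread hH / 2) ^ 2 := by
      rw [hvar]
      exact key_popoviciu p lam hp hsum
    have hΔ : 0 ≤ spectralSpread hH := by
      obtain ⟨i⟩ := hne
      have h1 : (⨅ j, lam j) ≤ lam i := ciInf_le (Set.Finite.bddBelow (Set.finite_range lam)) i
      have h2 : lam i ≤ ⨆ j, lam j := le_ciSup (Set.Finite.bddAbove (Set.finite_range lam)) i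
      rw [spectralSpread]
      rw [← hlam]
      linarith
    have hs : Real.sqrt (matVariance H ψ) ≤ spectralSpread hH / 2 := by
      calc Real.sqrt (matVariance H ψ) ≤ Real.sqrt ((spectralSpread hH / 2) ^ 2) :=
            Real.sqrt_le_sqrt hpop
        _ = spectralSpread hH / 2 := Real.sqrt_sq (by linarith)
    rw [mul_div_assoc]
    exact mul_le_mul_of_nonneg_left hs (abs_nonneg θ)
end
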